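/- For any planar tree t ∈ PT_n and any weight ω of length n, the Loday realization P_{(t,ω)} ⊆ ℝ^{n−1} satisfies: (1) it is contained in the hyperplane Σ_{i∈E(t)} x_i = Σ_{k<ℓ, k,ℓ∈V(t)} ω_k ω_ℓ; (2) for every nontrivial nest N of t and every maximal nesting 𝒩 of t, the point M(t,𝒩,ω) satisfies Σ_{i∈E(t(N))} x_i ≥ Σ_{k<ℓ, k,ℓ∈V(t(N))} ω_k ω_ℓ, with equality if and only if N ∈ 𝒩; (3) P_{(t,ω)} is exactly the intersection of the hyperplane of (1) with the half-spaces of (2) over all nontrivial nests N. -/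

import Mathlib

/-!
Write `V_i` for the vertex set of `t(min 𝒩(i))`. Then `α_i β_i` is the total weight `ω_k ω_l` of
the pairs `k < l` of `V_i` lying on different sides of the edge `i`, and in a maximal nesting
every pair of distinct vertices is split in this sense by exactly one edge: the edge of its path
with the largest minimal nest. Summing over the edges of a nest `N` thus counts each pair of
`V(t(N))` once, plus nonnegative contributions of pairs leaving `V(t(N))`; these vanish iff `min
𝒩(i) ⊆ N` for all `i ∈ N`, i.e. iff `N ∈ 𝒩`. This gives (1), (2) and the inclusion of `P_{(t,ω)}`
in the polyhedron `Q` of (3).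

Conversely `Q` is compact and convex, hence by Krein–Milman the closed convex hull of its extreme
points. Inclusion–exclusion for the pair weights shows that the nests tight at a point of `Q` form
a nesting. At an extreme point the tight equalities determine the point, so this nesting has `n -
1` members, i.e. is maximal, and the point is `M(t, 𝒩, ω)`.
-/

open scoped BigOperators

noncomputable section

/-- Vectors in `ℝⁿ`. -/
abbrev Vec (n : ℕ) := Fin n → ℝ

/-- The standard scalar product on `ℝⁿ`. -/
def dot {n : ℕ} (x y : Vec n) : ℝ := ∑ i, x i * y i

/-- A polytope is the convex hull of a finite set of points. -/
def IsPolytope {n : ℕ} (P : Set (Vec n)) : Prop :=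
  ∃ S : Finset (Vec n), P = convexHull ℝ (S : Set (Vec n))

/-- A face of `P`: either `P` itself (take `c = 0`) or the subset of `P` where some linear
functional attains its maximum over `P`. -/
def IsFace {n : ℕ} (P F : Set (Vec n)) : Prop :=
  ∃ c : Vec n, F = {x ∈ P | ∀ y ∈ P, dot c y ≤ dot c x}

/-- Dimension of a subset of `ℝⁿ`: the rank of the direction of its affine span. -/
noncomputable def sdim {n : ℕ} (A : Set (Vec n)) : ℕ :=
  Module.finrank ℝ (affineSpan ℝ A).direction

/-- The normal cone of a face `F` of `P`. -/
def normalCone {n : ℕ} (P F : Set (Vec n)) : Set (Vec n) :=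
  {c | F ⊆ {x ∈ P | ∀ y ∈ P, dot c y ≤ dot c x}}

/-- `coneOf X`: nonnegative linear combinations of finitely many elements of `X`. -/
def coneOf {n : ℕ} (X : Set (Vec n)) : Set (Vec n) :=
  {v | ∃ (k : ℕ) (x : Fin k → Vec n) (l : Fin k → ℝ),
      (∀ i, x i ∈ X) ∧ (∀ i, 0 ≤ l i) ∧ v = ∑ i, l i • x i}

/-- The reflection `ρ_z P = 2z - P` of `P` with respect to `z`. -/
def reflP {n : ℕ} (z : Vec n) (P : Set (Vec n)) : Set (Vec n) :=
  (fun x => (2 : ℝ) • z - x) '' P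

/-- An edge is a 1-dimensional face. -/
def IsEdge {n : ℕ} (P E : Set (Vec n)) : Prop := IsFace P E ∧ sdim E = 1

/-- `(P, v)` is oriented if `v` is not perpendicular to any edge of `P`. -/
def Oriented {n : ℕ} (P : Set (Vec n)) (v : Vec n) : Prop :=
  ∀ E, IsEdge P E → ∀ d ∈ (affineSpan ℝ E).direction, d ≠ 0 → dot d v ≠ 0

/-- `(P, v)` is positively oriented if `(P ∩ ρ_z P, v)` is oriented for every `z ∈ P`. -/
def PosOriented {n : ℕ} (P : Set (Vec n)) (v : Vec n) : Prop :=
  ∀ z ∈ P, Oriented (P ∩ reflP z P) v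

/-- `x` is the minimizer of `⟨-, v⟩` on `P`. -/
def IsBotOf {n : ℕ} (P : Set (Vec n)) (v x : Vec n) : Prop :=
  x ∈ P ∧ ∀ y ∈ P, dot v x ≤ dot v y

/-- `x` is the maximizer of `⟨-, v⟩` on `P`. -/
def IsTopOf {n : ℕ} (P : Set (Vec n)) (v x : Vec n) : Prop :=
  x ∈ P ∧ ∀ y ∈ P, dot v y ≤ dot v x

/-- `(P, v)` is quasi-oriented if `⟨-, v⟩` has a unique minimizer and a unique maximizer on `P`. -/
def QuasiOriented {n : ℕ} (P : Set (Vec n)) (v : Vec n) : Prop :=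
  (∃! x, IsBotOf P v x) ∧ (∃! x, IsTopOf P v x)

/-- `(P, v)` is quasi-positively oriented if `(P ∩ ρ_z P, v)` is quasi-oriented for all `z ∈ P`. -/
def QuasiPosOriented {n : ℕ} (P : Set (Vec n)) (v : Vec n) : Prop :=
  ∀ z ∈ P, QuasiOriented (P ∩ reflP z P) v

/-- The polytope `P^φ = π^φ(P × P) ⊆ ℝ^{n+1}`, where `π^φ(x,y) = ((x+y)/2, ⟨x - y, v⟩)`. -/
def Pphi {n : ℕ} (P : Set (Vec n)) (v : Vec n) : Set (Vec (n + 1)) :=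
  {w | ∃ x ∈ P, ∃ y ∈ P, w = Fin.snoc ((1 / 2 : ℝ) • (x + y)) (dot (x - y) v)}

/-- The pair of faces `(F, G)` belongs to `F^φ`: there are no `x ∈ F`, `y ∈ G`, `λ > 0` with
`(π(x,y), φ(x,y) - λ) ∈ P^φ`. -/
def InFphi {n : ℕ} (P : Set (Vec n)) (v : Vec n) (F G : Set (Vec n)) : Prop :=
  ¬ ∃ x ∈ F, ∃ y ∈ G, ∃ lam : ℝ, 0 < lam ∧
      (Fin.snoc ((1 / 2 : ℝ) • (x + y)) (dot (x - y) v - lam) : Vec (n + 1)) ∈ Pphi P v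

/-- The set `(A + B)/2`. -/
def avgSet {n : ℕ} (A B : Set (Vec n)) : Set (Vec n) :=
  {z | ∃ x ∈ A, ∃ y ∈ B, z = (1 / 2 : ℝ) • (x + y)}

/-- The coherent subdivision `π(F^φ)` is tight. -/
def TightSub {n : ℕ} (P : Set (Vec n)) (v : Vec n) : Prop :=
  ∀ F G : Set (Vec n), IsFace P F → IsFace P G → F.Nonempty → G.Nonempty →
    InFphi P v F G → sdim F + sdim G = sdim (avgSet F G)

/-- `d` is a direction of an edge of `P ∩ ρ_z P` for some `z ∈ P`; the hyperplanes of the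
fundamental hyperplane arrangement `H_P` are the orthogonal complements of such directions. -/
def EdgeDir {n : ℕ} (P : Set (Vec n)) (d : Vec n) : Prop :=
  d ≠ 0 ∧ ∃ z ∈ P, ∃ E, IsEdge (P ∩ reflP z P) E ∧ d ∈ (affineSpan ℝ E).direction

/-- The cone `cone(-N_P(F) ∪ N_P(G))`. -/
def diagCone {n : ℕ} (P F G : Set (Vec n)) : Set (Vec n) :=
  coneOf ((Neg.neg '' normalCone P F) ∪ normalCone P G)


/-- A planar rooted tree with `n` internal vertices labelled `0, …, n-1` in the clockwise-from-root
(depth-first preorder) order; `parent v` is the parent of the vertex `v`, the root being vertex `0`.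
The internal edge `e : Fin (n-1)` connects the vertex `e+1` to its parent. -/
structure PTree (n : ℕ) where
  parent : Fin n → Fin n
  parent_zero : ∀ v : Fin n, v.val = 0 → parent v = v
  parent_lt : ∀ v : Fin n, 0 < v.val → (parent v).val < v.val
  preorder : ∀ v w : Fin n, w.val = v.val + 1 → ∃ k : ℕ, parent^[k] v = parent w

/-- The child endpoint of the edge `e`: the vertex labelled `e + 1`. -/
def childV {n : ℕ} (e : Fin (n - 1)) : Fin n :=
  ⟨e.val + 1, by have h := e.isLt; omega⟩

/-- The vertices of the closure of a set of edges `N`, i.e. `V(t(N))`. -/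
def nestVtx {n : ℕ} (t : PTree n) (N : Finset (Fin (n - 1))) : Finset (Fin n) :=
  N.biUnion fun e => {childV e, t.parent (childV e)}

/-- Two distinct edges are adjacent when they share a vertex. -/
def edgeAdj {n : ℕ} (t : PTree n) (e f : Fin (n - 1)) : Prop :=
  e ≠ f ∧ (({childV e, t.parent (childV e)} ∩ {childV f, t.parent (childV f)} :
      Finset (Fin n))).Nonempty

instance {n : ℕ} (t : PTree n) (e f : Fin (n - 1)) : Decidable (edgeAdj t e f) := by
  unfold edgeAdj; infer_instance

/-- A nest: a set of edges whose closure is a connected subgraph (the trivial nest `E(t)` is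
also allowed when `n = 1`, where it is empty). -/
def IsNest {n : ℕ} (t : PTree n) (N : Finset (Fin (n - 1))) : Prop :=
  (N.Nonempty ∨ N = Finset.univ) ∧
    ∀ e ∈ N, ∀ f ∈ N,
      Relation.ReflTransGen (fun a b => a ∈ N ∧ b ∈ N ∧ edgeAdj t a b) e f

/-- A nesting: a set of nests containing the trivial nest, any two of which are nested or
disjoint, disjoint ones having no adjacent edges. -/
def IsNesting {n : ℕ} (t : PTree n) (𝒩 : Finset (Finset (Fin (n - 1)))) : Prop :=
  (∀ N ∈ 𝒩, IsNest t N) ∧ Finset.univ ∈ 𝒩 ∧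
    ∀ N ∈ 𝒩, ∀ M ∈ 𝒩,
      N ⊆ M ∨ M ⊆ N ∨ (Disjoint N M ∧ ∀ e ∈ N, ∀ f ∈ M, ¬ edgeAdj t e f)

/-- A maximal nesting: a nesting of (maximal) cardinality `n - 1`. -/
def IsMaxNesting {n : ℕ} (t : PTree n) (𝒩 : Finset (Finset (Fin (n - 1)))) : Prop :=
  IsNesting t 𝒩 ∧ 𝒩.card = n - 1

/-- `min 𝒩(i)`: the smallest nest of `𝒩` containing the edge `i` (the nests of a nesting
containing `i` being totally ordered, this is their intersection). -/
def minNest {n : ℕ} (𝒩 : Finset (Finset (Fin (n - 1)))) (i : Fin (n - 1)) :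
    Finset (Fin (n - 1)) :=
  (𝒩.filter fun N => i ∈ N).inf id

/-- `u` is a weak ancestor of `w` (any ancestor is reached in at most `n` steps). -/
def isAnc {n : ℕ} (t : PTree n) (u w : Fin n) : Prop :=
  ∃ k ∈ Finset.range (n + 1), t.parent^[k] w = u

instance {n : ℕ} (t : PTree n) (u w : Fin n) : Decidable (isAnc t u w) := by
  unfold isAnc; infer_instance

/-- `α_i`: the total weight of the subtree `t₁` of `t(min𝒩(i))` having the edge `i` as root. -/
def alphaN {n : ℕ} (t : PTree n) (𝒩 : Finset (Finset (Fin (n - 1))))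
    (ω : Fin n → ℤ) (i : Fin (n - 1)) : ℤ :=
  ∑ w ∈ (nestVtx t (minNest 𝒩 i)).filter (fun w => isAnc t (childV i) w), ω w

/-- `β_i`: the total weight of the subtree `t₂` of `t(min𝒩(i))` having the edge `i` as a leaf. -/
def betaN {n : ℕ} (t : PTree n) (𝒩 : Finset (Finset (Fin (n - 1))))
    (ω : Fin n → ℤ) (i : Fin (n - 1)) : ℤ :=
  ∑ w ∈ (nestVtx t (minNest 𝒩 i)).filter (fun w => ¬ isAnc t (childV i) w), ω w

/-- The point `M(t, 𝒩, ω) = (α₁β₁, …, α_{n-1}β_{n-1})`. -/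
noncomputable def MPoint {n : ℕ} (t : PTree n) (𝒩 : Finset (Finset (Fin (n - 1))))
    (ω : Fin n → ℤ) : Vec (n - 1) :=
  fun i => ((alphaN t 𝒩 ω i : ℤ) : ℝ) * ((betaN t 𝒩 ω i : ℤ) : ℝ)

/-- The Loday realization `P_{(t,ω)}` of the operahedron. -/
noncomputable def Loday {n : ℕ} (t : PTree n) (ω : Fin n → ℤ) : Set (Vec (n - 1)) :=
  convexHull ℝ {x | ∃ 𝒩, IsMaxNesting t 𝒩 ∧ x = MPoint t 𝒩 ω}

/-- The face of `P_{(t,ω)}` associated to a nesting `𝒩`: the convex hull of the points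
`M(t,𝒩',ω)` over the maximal nestings `𝒩' ⊇ 𝒩`. -/
noncomputable def faceOfNesting {n : ℕ} (t : PTree n) (ω : Fin n → ℤ)
    (𝒩 : Finset (Finset (Fin (n - 1)))) : Set (Vec (n - 1)) :=
  convexHull ℝ {x | ∃ 𝒩', IsMaxNesting t 𝒩' ∧ 𝒩 ⊆ 𝒩' ∧ x = MPoint t 𝒩' ω}

/-- A pair `(I, J) ∈ D(m)`: disjoint subsets of the same cardinality with `min (I ∪ J) ∈ I`. -/
def DPair {m : ℕ} (I J : Finset (Fin m)) : Prop :=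
  I.card = J.card ∧ Disjoint I J ∧ ∃ i ∈ I, ∀ x ∈ I ∪ J, i ≤ x

/-- A trinary vector: all coordinates are `0`, `1` or `-1`. -/
def Trinary {m : ℕ} (u : Vec m) : Prop := ∀ i, u i = 0 ∨ u i = 1 ∨ u i = -1

/-- A balanced vector: same number of coordinates equal to `1` and to `-1`. -/
def BalancedVec {m : ℕ} (u : Vec m) : Prop :=
  (Finset.univ.filter fun i => u i = 1).card = (Finset.univ.filter fun i => u i = -1).card

/-- The first nonzero coordinate is `1`. -/
def FirstPos {m : ℕ} (u : Vec m) : Prop :=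
  ∀ i, u i ≠ 0 → (∀ j, j < i → u j = 0) → u i = 1

section Ancestors

variable {n : ℕ}

namespace PTree

variable (t : PTree n)

lemma parent_val_le (v : Fin n) : (t.parent v).val ≤ v.val := by
  rcases Nat.eq_zero_or_pos v.val with h | h
  · rw [t.parent_zero v h]
  · exact (t.parent_lt v h).le

lemma iterate_parent_val_le (k : ℕ) (v : Fin n) : (t.parent^[k] v).val ≤ v.val := by
  induction k with
  | zero => rfl
  | succ k ih => rw [Function.iterate_succ_apply']; exact (t.parent_val_le _).trans ih

lemma iterate_parent_of_val_eq_zero {v : Fin n} (h : v.val = 0) (k : ℕ) : t.parent^[k] v = v :=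
  Function.iterate_fixed (t.parent_zero v h) k

lemma iterate_parent_val_lt {k : ℕ} (hk : 0 < k) {v : Fin n} (hv : v.val ≠ 0) :
    (t.parent^[k] v).val < v.val := by
  obtain ⟨k, rfl⟩ := Nat.exists_eq_succ_of_ne_zero hk.ne'
  rw [Function.iterate_succ_apply]
  exact (t.iterate_parent_val_le k _).trans_lt (t.parent_lt v (Nat.pos_of_ne_zero hv))

lemma iterate_parent_val_eq_zero_or (k : ℕ) (v : Fin n) :
    (t.parent^[k] v).val = 0 ∨ (t.parent^[k] v).val + k ≤ v.val := by
  induction k with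
  | zero => simp
  | succ k ih =>
    rw [Function.iterate_succ_apply']
    rcases Nat.eq_zero_or_pos (t.parent^[k] v).val with h | h
    · exact Or.inl (by rw [t.parent_zero _ h, h])
    · have := t.parent_lt _ h
      omega

lemma iterate_parent_n_val (v : Fin n) : (t.parent^[n] v).val = 0 := by
  have := v.isLt
  have := t.iterate_parent_val_eq_zero_or n v
  omega

end PTree

lemma isAnc_iff {t : PTree n} {u w : Fin n} : isAnc t u w ↔ ∃ k, t.parent^[k] w = u := by
  refine ⟨fun ⟨k, _, hk⟩ => ⟨k, hk⟩, fun ⟨k, hk⟩ => ?_⟩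
  rcases le_or_gt k n with h | h
  · exact ⟨k, Finset.mem_range.2 (by omega), hk⟩
  · refine ⟨n, Finset.mem_range.2 (by omega), ?_⟩
    rw [← hk, ← Nat.sub_add_cancel h.le, Function.iterate_add_apply,
      t.iterate_parent_of_val_eq_zero (t.iterate_parent_n_val w)]

variable {t : PTree n} {u v w : Fin n}

lemma isAnc_refl (t : PTree n) (v : Fin n) : isAnc t v v := isAnc_iff.2 ⟨0, rfl⟩

lemma isAnc_parent (t : PTree n) (v : Fin n) : isAnc t (t.parent v) v := isAnc_iff.2 ⟨1, rfl⟩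

lemma isAnc_of_val_eq_zero (t : PTree n) (h : u.val = 0) (w : Fin n) : isAnc t u w :=
  isAnc_iff.2 ⟨n, Fin.ext (by rw [t.iterate_parent_n_val w, h])⟩

lemma isAnc.trans (h₁ : isAnc t u v) (h₂ : isAnc t v w) : isAnc t u w := by
  obtain ⟨a, rfl⟩ := isAnc_iff.1 h₁
  obtain ⟨b, rfl⟩ := isAnc_iff.1 h₂
  exact isAnc_iff.2 ⟨a + b, Function.iterate_add_apply _ _ _ _⟩

lemma isAnc.val_le (h : isAnc t u w) : u.val ≤ w.val := by
  obtain ⟨k, rfl⟩ := isAnc_iff.1 h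
  exact t.iterate_parent_val_le k w

lemma isAnc.antisymm (h₁ : isAnc t u w) (h₂ : isAnc t w u) : u = w := by
  obtain ⟨k, rfl⟩ := isAnc_iff.1 h₁
  rcases Nat.eq_zero_or_pos k with rfl | hk
  · rfl
  by_cases hw : w.val = 0
  · exact t.iterate_parent_of_val_eq_zero hw k
  · exact absurd h₂.val_le (not_le.2 (t.iterate_parent_val_lt hk hw))

lemma isAnc.of_parent (h : isAnc t u (t.parent w)) : isAnc t u w :=
  h.trans (isAnc_parent t w)

lemma isAnc.parent_of_ne (h : isAnc t u w) (hne : u ≠ w) : isAnc t u (t.parent w) := by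
  obtain ⟨k, rfl⟩ := isAnc_iff.1 h
  cases k with
  | zero => exact absurd rfl hne
  | succ k => exact isAnc_iff.2 ⟨k, (Function.iterate_succ_apply _ _ _).symm⟩

lemma isAnc.exists_child (h : isAnc t u w) (hne : u ≠ w) :
    ∃ v, t.parent v = u ∧ isAnc t v w ∧ v ≠ u := by
  obtain ⟨k, rfl⟩ := isAnc_iff.1 h
  induction k with
  | zero => exact absurd rfl hne
  | succ k ih =>
    by_cases hk : t.parent^[k] w = t.parent^[k + 1] w
    · exact hk ▸ ih (isAnc_iff.2 ⟨k, rfl⟩) (hk ▸ hne)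
    · exact ⟨t.parent^[k] w, (Function.iterate_succ_apply' _ _ _).symm, isAnc_iff.2 ⟨k, rfl⟩,
        hk⟩

end Ancestors

section Edges

variable {n : ℕ} {t : PTree n}

lemma childV_val (e : Fin (n - 1)) : (childV e : Fin n).val = e.val + 1 := rfl

lemma childV_injective : Function.Injective (childV (n := n)) :=
  fun a b h => Fin.ext (by simpa [childV_val] using congrArg Fin.val h)

lemma exists_childV_eq {v : Fin n} (hv : v.val ≠ 0) : ∃ e : Fin (n - 1), childV e = v :=
  ⟨⟨v.val - 1, by have := v.isLt; omega⟩, Fin.ext (show v.val - 1 + 1 = v.val by omega)⟩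

lemma parent_childV_lt (t : PTree n) (e : Fin (n - 1)) :
    (t.parent (childV e)).val < (childV e : Fin n).val :=
  t.parent_lt _ (Nat.succ_pos _)

lemma not_isAnc_childV_parent (t : PTree n) (e : Fin (n - 1)) :
    ¬ isAnc t (childV e) (t.parent (childV e)) :=
  fun h => (parent_childV_lt t e).not_ge h.val_le

lemma isAnc_childV_parent_iff {e f : Fin (n - 1)} (hne : e ≠ f) :
    isAnc t (childV e) (t.parent (childV f)) ↔ isAnc t (childV e) (childV f) :=
  ⟨isAnc.of_parent, fun h => h.parent_of_ne (childV_injective.ne hne)⟩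

def endpoints (t : PTree n) (e : Fin (n - 1)) : Finset (Fin n) := {childV e, t.parent (childV e)}

lemma mem_endpoints {e : Fin (n - 1)} {v : Fin n} :
    v ∈ endpoints t e ↔ v = childV e ∨ v = t.parent (childV e) := by
  simp [endpoints]

lemma childV_mem_endpoints (t : PTree n) (e : Fin (n - 1)) : childV e ∈ endpoints t e :=
  mem_endpoints.2 (Or.inl rfl)

lemma parent_childV_mem_endpoints (t : PTree n) (e : Fin (n - 1)) :
    t.parent (childV e) ∈ endpoints t e :=
  mem_endpoints.2 (Or.inr rfl)

lemma mem_nestVtx {N : Finset (Fin (n - 1))} {v : Fin n} :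
    v ∈ nestVtx t N ↔ ∃ e ∈ N, v ∈ endpoints t e :=
  Finset.mem_biUnion

lemma endpoints_subset_nestVtx {N : Finset (Fin (n - 1))} {e : Fin (n - 1)} (he : e ∈ N) :
    endpoints t e ⊆ nestVtx t N :=
  fun _ hv => mem_nestVtx.2 ⟨e, he, hv⟩

lemma nestVtx_mono {N M : Finset (Fin (n - 1))} (h : N ⊆ M) : nestVtx t N ⊆ nestVtx t M :=
  Finset.biUnion_subset_biUnion_of_subset_left _ h

lemma nestVtx_union (N M : Finset (Fin (n - 1))) :
    nestVtx t (N ∪ M) = nestVtx t N ∪ nestVtx t M :=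
  Finset.union_biUnion

lemma nestVtx_univ (hn : 2 ≤ n) (t : PTree n) : nestVtx t Finset.univ = Finset.univ := by
  refine Finset.eq_univ_of_forall fun v => ?_
  by_cases hv : v.val = 0
  · let e : Fin (n - 1) := ⟨0, by omega⟩
    have hroot : t.parent (childV e) = v :=
      Fin.ext (by have : (t.parent (childV e)).val < 1 := parent_childV_lt t e; omega)
    exact mem_nestVtx.2 ⟨e, Finset.mem_univ _, hroot ▸ parent_childV_mem_endpoints t e⟩
  · obtain ⟨e, rfl⟩ := exists_childV_eq hv
    exact mem_nestVtx.2 ⟨e, Finset.mem_univ _, childV_mem_endpoints t e⟩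

lemma edgeAdj_iff {e f : Fin (n - 1)} :
    edgeAdj t e f ↔ e ≠ f ∧ ∃ v, v ∈ endpoints t e ∧ v ∈ endpoints t f := by
  simp only [edgeAdj, Finset.Nonempty, Finset.mem_inter, endpoints]

lemma edgeAdj.symm {e f : Fin (n - 1)} (h : edgeAdj t e f) : edgeAdj t f e := by
  obtain ⟨hne, v, hve, hvf⟩ := edgeAdj_iff.1 h
  exact edgeAdj_iff.2 ⟨hne.symm, v, hvf, hve⟩

abbrev EdgeReach (t : PTree n) (S : Finset (Fin (n - 1))) : Fin (n - 1) → Fin (n - 1) → Prop :=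
  Relation.ReflTransGen fun a b => a ∈ S ∧ b ∈ S ∧ edgeAdj t a b

def EdgesConnected (t : PTree n) (S : Finset (Fin (n - 1))) : Prop :=
  ∀ e ∈ S, ∀ f ∈ S, EdgeReach t S e f

lemma IsNest.edgesConnected {N : Finset (Fin (n - 1))} (hN : IsNest t N) :
    EdgesConnected t N :=
  hN.2

variable {S S' : Finset (Fin (n - 1))} {e f : Fin (n - 1)}

lemma EdgeReach.mono (h : S ⊆ S') (hr : EdgeReach t S e f) : EdgeReach t S' e f :=
  Relation.ReflTransGen.mono (fun _ _ ⟨ha, hb, hab⟩ => ⟨h ha, h hb, hab⟩) _ _ hr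

lemma EdgeReach.symm (hr : EdgeReach t S e f) : EdgeReach t S f e :=
  Relation.ReflTransGen.mono (fun _ _ ⟨ha, hb, hab⟩ => ⟨hb, ha, hab.symm⟩) _ _
    (Relation.ReflTransGen.swap _ _ hr)

lemma edgeReach_of_mem_endpoints (he : e ∈ S) (hf : f ∈ S) {v : Fin n}
    (hve : v ∈ endpoints t e) (hvf : v ∈ endpoints t f) : EdgeReach t S e f := by
  by_cases hef : e = f
  · exact hef ▸ Relation.ReflTransGen.refl
  · exact Relation.ReflTransGen.single ⟨he, hf, edgeAdj_iff.2 ⟨hef, v, hve, hvf⟩⟩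

lemma isAnc_childV_iff_of_edgesConnected (hS : EdgesConnected t S) {i : Fin (n - 1)} (hi : i ∉ S)
    {v w : Fin n} (hv : v ∈ nestVtx t S) (hw : w ∈ nestVtx t S) :
    isAnc t (childV i) v ↔ isAnc t (childV i) w := by
  -- both endpoints of an edge other than `i` lie on the same side of `i`
  have hend : ∀ e ∈ S, ∀ u ∈ endpoints t e,
      (isAnc t (childV i) u ↔ isAnc t (childV i) (childV e)) := by
    intro e he u hu
    rcases mem_endpoints.1 hu with rfl | rfl
    · rfl
    · exact isAnc_childV_parent_iff (ne_of_mem_of_not_mem he hi).symm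
  obtain ⟨e, he, hve⟩ := mem_nestVtx.1 hv
  obtain ⟨f, hf, hwf⟩ := mem_nestVtx.1 hw
  rw [hend e he v hve, hend f hf w hwf]
  have hr := hS e he f hf
  clear hw hwf hf
  induction hr with
  | refl => rfl
  | tail _ hab ih =>
    obtain ⟨ha, hb, hadj⟩ := hab
    obtain ⟨-, u, hua, hub⟩ := edgeAdj_iff.1 hadj
    exact ih.trans ((hend _ ha u hua).symm.trans (hend _ hb u hub))

lemma mem_of_endpoints_subset (hS : EdgesConnected t S) (h : endpoints t e ⊆ nestVtx t S) :
    e ∈ S := by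
  by_contra he
  exact not_isAnc_childV_parent t e ((isAnc_childV_iff_of_edgesConnected hS he
    (h (childV_mem_endpoints t e)) (h (parent_childV_mem_endpoints t e))).1 (isAnc_refl t _))

end Edges

section Paths

variable {n : ℕ} {t : PTree n}

/-- The edges below which exactly one of `k`, `l` lies: the edges of the path from `k` to `l`. -/
def pathEdges (t : PTree n) (k l : Fin n) : Finset (Fin (n - 1)) :=
  Finset.univ.filter fun e => ¬ (isAnc t (childV e) k ↔ isAnc t (childV e) l)

variable {k l : Fin n} {e : Fin (n - 1)}

lemma mem_pathEdges :
    e ∈ pathEdges t k l ↔ ¬ (isAnc t (childV e) k ↔ isAnc t (childV e) l) := by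
  simp [pathEdges]

lemma pathEdges_comm (t : PTree n) (k l : Fin n) : pathEdges t k l = pathEdges t l k := by
  ext e
  simp only [mem_pathEdges, iff_comm]

lemma pathEdges_self (t : PTree n) (k : Fin n) : pathEdges t k k = ∅ := by
  ext e
  simp [mem_pathEdges]

lemma pathEdges_subset_of_edgesConnected {S : Finset (Fin (n - 1))} (hS : EdgesConnected t S)
    (hk : k ∈ nestVtx t S) (hl : l ∈ nestVtx t S) : pathEdges t k l ⊆ S := by
  intro e he
  by_contra heS
  exact mem_pathEdges.1 he (isAnc_childV_iff_of_edgesConnected hS heS hk hl)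

lemma mem_nestVtx_pathEdges (hkl : k ≠ l) : k ∈ nestVtx t (pathEdges t k l) := by
  by_cases h : isAnc t k l
  · obtain ⟨v, rfl, hvl, hvk⟩ := h.exists_child hkl
    have hv0 : v.val ≠ 0 := fun h0 => hvk (t.parent_zero v h0).symm
    obtain ⟨e, rfl⟩ := exists_childV_eq hv0
    refine mem_nestVtx.2 ⟨e, mem_pathEdges.2 ?_, parent_childV_mem_endpoints t e⟩
    exact fun hiff => not_isAnc_childV_parent t e (hiff.2 hvl)
  · have hk0 : k.val ≠ 0 := fun h0 => h (isAnc_of_val_eq_zero t h0 l)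
    obtain ⟨e, rfl⟩ := exists_childV_eq hk0
    exact mem_nestVtx.2 ⟨e, mem_pathEdges.2 fun hiff => h (hiff.1 (isAnc_refl t _)),
      childV_mem_endpoints t e⟩

lemma pathEdges_eq_insert (h : ¬ isAnc t (childV e) l) :
    pathEdges t (childV e) l = insert e (pathEdges t (t.parent (childV e)) l) := by
  ext f
  rw [Finset.mem_insert, mem_pathEdges, mem_pathEdges]
  by_cases hfe : f = e
  · subst hfe
    simp [isAnc_refl, h]
  · rw [isAnc_childV_parent_iff hfe]
    tauto

lemma edgesConnected_pathEdges_of_parent (h : ¬ isAnc t (childV e) l)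
    (hP : EdgesConnected t (pathEdges t (t.parent (childV e)) l)) :
    EdgesConnected t (pathEdges t (childV e) l) := by
  rw [pathEdges_eq_insert h]
  set P := pathEdges t (t.parent (childV e)) l
  have hPsub : P ⊆ insert e P := Finset.subset_insert e P
  have he_reach : ∀ b ∈ P, EdgeReach t (insert e P) e b := by
    intro b hb
    have hne : t.parent (childV e) ≠ l := by
      rintro hpl
      simp [P, hpl, pathEdges_self] at hb
    obtain ⟨g, hg, hpg⟩ := mem_nestVtx.1 (mem_nestVtx_pathEdges (t := t) hne)
    exact (edgeReach_of_mem_endpoints (Finset.mem_insert_self e P) (hPsub hg)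
      (parent_childV_mem_endpoints t e) hpg).trans ((hP g hg b hb).mono hPsub)
  intro a ha b hb
  rcases Finset.mem_insert.1 ha with rfl | ha <;> rcases Finset.mem_insert.1 hb with rfl | hb
  · exact Relation.ReflTransGen.refl
  · exact he_reach b hb
  · exact (he_reach a ha).symm
  · exact (hP a ha b hb).mono hPsub

lemma edgesConnected_pathEdges (t : PTree n) (k l : Fin n) :
    EdgesConnected t (pathEdges t k l) := by
  induction hs : k.val + l.val using Nat.strong_induction_on generalizing k l with
  | _ s ih =>
    have step : ∀ k l : Fin n, k.val + l.val = s → ¬ isAnc t k l →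
        EdgesConnected t (pathEdges t k l) := by
      intro k l hs hkl
      obtain ⟨e, rfl⟩ := exists_childV_eq fun h0 => hkl (isAnc_of_val_eq_zero t h0 l)
      exact edgesConnected_pathEdges_of_parent hkl
        (ih _ (hs ▸ by have := parent_childV_lt t e; omega) _ _ rfl)
    by_cases hkl : isAnc t k l
    · by_cases heq : k = l
      · subst heq
        simp [EdgesConnected, pathEdges_self]
      · rw [pathEdges_comm]
        exact step l k (by omega) fun hlk => heq (hkl.antisymm hlk)
    · exact step k l hs hkl

lemma edgeReach_of_pathEdges_subset {K : Finset (Fin (n - 1))} {c d : Fin (n - 1)}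
    (hc : c ∈ K) (hd : d ∈ K) (hK : pathEdges t (childV c) (childV d) ⊆ K) :
    EdgeReach t K c d := by
  by_cases hcd : c = d
  · exact hcd ▸ Relation.ReflTransGen.refl
  have hne : (childV c : Fin n) ≠ childV d := childV_injective.ne hcd
  obtain ⟨e, he, hce⟩ := mem_nestVtx.1 (mem_nestVtx_pathEdges (t := t) hne)
  obtain ⟨f, hf, hdf⟩ := mem_nestVtx.1 (mem_nestVtx_pathEdges (t := t) hne.symm)
  rw [pathEdges_comm] at hf
  exact ((edgeReach_of_mem_endpoints hc (hK he) (childV_mem_endpoints t c) hce).trans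
    ((edgesConnected_pathEdges t _ _ e he f hf).mono hK)).trans
    (edgeReach_of_mem_endpoints (hK hf) hd hdf (childV_mem_endpoints t d))

end Paths

section Nests

variable {n : ℕ} {t : PTree n} {N M : Finset (Fin (n - 1))}

lemma IsNest.nonempty (hn : 2 ≤ n) (hN : IsNest t N) : N.Nonempty :=
  hN.1.elim id fun h => h ▸ ⟨⟨0, by omega⟩, Finset.mem_univ _⟩

lemma IsNest.pathEdges_subset (hN : IsNest t N) {k l : Fin n} (hk : k ∈ nestVtx t N)
    (hl : l ∈ nestVtx t N) : pathEdges t k l ⊆ N :=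
  pathEdges_subset_of_edgesConnected hN.edgesConnected hk hl

lemma IsNest.subset_of_nestVtx_subset (hM : IsNest t M) (h : nestVtx t N ⊆ nestVtx t M) :
    N ⊆ M :=
  fun _ he => mem_of_endpoints_subset hM.edgesConnected
    ((endpoints_subset_nestVtx he).trans h)

lemma isNest_univ (t : PTree n) : IsNest t Finset.univ :=
  ⟨Or.inr rfl, fun _ hc _ hd =>
    edgeReach_of_pathEdges_subset hc hd (Finset.subset_univ _)⟩

lemma isNest_singleton (t : PTree n) (i : Fin (n - 1)) : IsNest t {i} := by
  refine ⟨Or.inl (Finset.singleton_nonempty i), fun a ha b hb => ?_⟩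
  rw [Finset.mem_singleton.1 ha, Finset.mem_singleton.1 hb]

lemma IsNest.union (hN : IsNest t N) (hM : IsNest t M) {e f : Fin (n - 1)} (he : e ∈ N)
    (hf : f ∈ M) (hef : e = f ∨ edgeAdj t e f) : IsNest t (N ∪ M) := by
  refine ⟨Or.inl ⟨e, Finset.mem_union_left _ he⟩, ?_⟩
  have bridge : EdgeReach t (N ∪ M) e f := by
    rcases hef with rfl | hadj
    · exact Relation.ReflTransGen.refl
    · exact .single ⟨Finset.mem_union_left _ he, Finset.mem_union_right _ hf, hadj⟩
  have toN : ∀ c ∈ N, EdgeReach t (N ∪ M) c e := fun c hc =>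
    (hN.edgesConnected c hc e he).mono Finset.subset_union_left
  have fromM : ∀ c ∈ M, EdgeReach t (N ∪ M) f c := fun c hc =>
    (hM.edgesConnected f hf c hc).mono Finset.subset_union_right
  intro a ha b hb
  rcases Finset.mem_union.1 ha with ha | ha <;> rcases Finset.mem_union.1 hb with hb | hb
  · exact (hN.edgesConnected a ha b hb).mono Finset.subset_union_left
  · exact ((toN a ha).trans bridge).trans (fromM b hb)
  · exact EdgeReach.symm (((toN b hb).trans bridge).trans (fromM a ha))
  · exact (hM.edgesConnected a ha b hb).mono Finset.subset_union_right

lemma IsNest.inter (hN : IsNest t N) (hM : IsNest t M) (h : (N ∩ M).Nonempty) :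
    IsNest t (N ∩ M) := by
  refine ⟨Or.inl h, fun a ha b hb => edgeReach_of_pathEdges_subset ha hb ?_⟩
  rw [Finset.mem_inter] at ha hb
  exact Finset.subset_inter
    (hN.pathEdges_subset (endpoints_subset_nestVtx ha.1 (childV_mem_endpoints t a))
      (endpoints_subset_nestVtx hb.1 (childV_mem_endpoints t b)))
    (hM.pathEdges_subset (endpoints_subset_nestVtx ha.2 (childV_mem_endpoints t a))
      (endpoints_subset_nestVtx hb.2 (childV_mem_endpoints t b)))

lemma mem_nestVtx_inter (hN : IsNest t N) (hM : IsNest t M) {k l : Fin n} (hkl : k ≠ l)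
    (hk : k ∈ nestVtx t N ∩ nestVtx t M) (hl : l ∈ nestVtx t N ∩ nestVtx t M) :
    k ∈ nestVtx t (N ∩ M) := by
  rw [Finset.mem_inter] at hk hl
  exact nestVtx_mono (Finset.subset_inter (hN.pathEdges_subset hk.1 hl.1)
    (hM.pathEdges_subset hk.2 hl.2)) (mem_nestVtx_pathEdges hkl)

end Nests

section Nestings

open Finset

variable {n : ℕ} {t : PTree n} {𝒩 : Finset (Finset (Fin (n - 1)))} {N M : Finset (Fin (n - 1))}

lemma IsNesting.subset_or_subset (h𝒩 : IsNesting t 𝒩) (hN : N ∈ 𝒩) (hM : M ∈ 𝒩)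
    {e f : Fin (n - 1)} (he : e ∈ N) (hf : f ∈ M) (hef : e = f ∨ edgeAdj t e f) :
    N ⊆ M ∨ M ⊆ N := by
  rcases h𝒩.2.2 N hN M hM with h | h | ⟨hd, hna⟩
  · exact Or.inl h
  · exact Or.inr h
  · rcases hef with rfl | hadj
    · exact absurd hf (disjoint_left.1 hd he)
    · exact absurd hadj (hna e he f hf)

lemma minNest_subset (hM : M ∈ 𝒩) {i : Fin (n - 1)} (hi : i ∈ M) : minNest 𝒩 i ⊆ M :=
  inf_le (mem_filter.2 ⟨hM, hi⟩)

lemma IsNesting.minNest_mem_and_mem_minNest (h𝒩 : IsNesting t 𝒩) (i : Fin (n - 1)) :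
    minNest 𝒩 i ∈ 𝒩 ∧ i ∈ minNest 𝒩 i := by
  have hne : (𝒩.filter (i ∈ ·)).Nonempty := ⟨_, mem_filter.2 ⟨h𝒩.2.1, mem_univ i⟩⟩
  rw [minNest, ← inf'_eq_inf hne]
  refine inf'_mem {N | N ∈ 𝒩 ∧ i ∈ N} (fun A hA B hB => ?_) _ hne id
    fun N hN => mem_filter.1 hN
  rcases h𝒩.subset_or_subset hA.1 hB.1 hA.2 hB.2 (Or.inl rfl) with h | h
  · rwa [inf_eq_left.2 h]
  · rwa [inf_eq_right.2 h]

lemma IsNesting.minNest_mem (h𝒩 : IsNesting t 𝒩) (i : Fin (n - 1)) :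
    minNest 𝒩 i ∈ 𝒩 :=
  (h𝒩.minNest_mem_and_mem_minNest i).1

lemma IsNesting.mem_minNest (h𝒩 : IsNesting t 𝒩) (i : Fin (n - 1)) : i ∈ minNest 𝒩 i :=
  (h𝒩.minNest_mem_and_mem_minNest i).2

lemma IsNesting.subset_minNest (h𝒩 : IsNesting t 𝒩) {S : Finset (Fin (n - 1))}
    (hS : EdgesConnected t S) {i : Fin (n - 1)} (hi : i ∈ S)
    (hmax : ∀ j ∈ S, #(minNest 𝒩 j) ≤ #(minNest 𝒩 i)) : S ⊆ minNest 𝒩 i := by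
  intro j hj
  have hr := hS i hi j hj
  clear hj
  induction hr with
  | refl => exact h𝒩.mem_minNest i
  | @tail b c _ hbc ih =>
    obtain ⟨-, hc, hadj⟩ := hbc
    rcases h𝒩.subset_or_subset (h𝒩.minNest_mem i) (h𝒩.minNest_mem c) ih
      (h𝒩.mem_minNest c) (Or.inr hadj) with h | h
    · rw [eq_of_subset_of_card_le h (hmax c hc)]
      exact h𝒩.mem_minNest c
    · exact h (h𝒩.mem_minNest c)

lemma IsNesting.exists_minNest_eq (hn : 2 ≤ n) (h𝒩 : IsNesting t 𝒩) (hN : IsNest t N)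
    (h : ∀ i ∈ N, minNest 𝒩 i ⊆ N) : ∃ i ∈ N, minNest 𝒩 i = N := by
  obtain ⟨i, hi, hmax⟩ := exists_max_image N (fun j => #(minNest 𝒩 j)) (hN.nonempty hn)
  exact ⟨i, hi, (h i hi).antisymm (h𝒩.subset_minNest hN.edgesConnected hi hmax)⟩

lemma IsNesting.mem_of_forall_minNest_subset (hn : 2 ≤ n) (h𝒩 : IsNesting t 𝒩)
    (hN : IsNest t N) (h : ∀ i ∈ N, minNest 𝒩 i ⊆ N) : N ∈ 𝒩 := by
  obtain ⟨i, -, rfl⟩ := h𝒩.exists_minNest_eq hn hN h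
  exact h𝒩.minNest_mem i

lemma IsNesting.image_minNest (hn : 2 ≤ n) (h𝒩 : IsNesting t 𝒩) :
    univ.image (minNest 𝒩) = 𝒩 := by
  refine Subset.antisymm (fun M hM => ?_) fun M hM => ?_
  · obtain ⟨i, -, rfl⟩ := mem_image.1 hM
    exact h𝒩.minNest_mem i
  · obtain ⟨i, -, rfl⟩ := h𝒩.exists_minNest_eq hn (h𝒩.1 M hM) fun i => minNest_subset hM
    exact mem_image_of_mem _ (mem_univ i)

lemma IsNesting.card_le (hn : 2 ≤ n) (h𝒩 : IsNesting t 𝒩) : #𝒩 ≤ n - 1 := by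
  rw [← h𝒩.image_minNest hn]
  exact card_image_le.trans (by simp)

lemma IsMaxNesting.minNest_injective (hn : 2 ≤ n) (h𝒩 : IsMaxNesting t 𝒩) :
    Function.Injective (minNest 𝒩) := by
  have hcard : #(univ.image (minNest 𝒩)) = #(univ : Finset (Fin (n - 1))) := by
    rw [h𝒩.1.image_minNest hn, h𝒩.2, card_univ, Fintype.card_fin]
  rw [← Set.injOn_univ, ← coe_univ]
  exact card_image_iff.1 hcard

end Nestings

section Splitters

open Finset

variable {n : ℕ} {t : PTree n} {𝒩 : Finset (Finset (Fin (n - 1)))} {N : Finset (Fin (n - 1))}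
  {k l : Fin n}

lemma pathEdges_nonempty (hkl : k ≠ l) : (pathEdges t k l).Nonempty := by
  obtain ⟨e, he, -⟩ := mem_nestVtx.1 (mem_nestVtx_pathEdges (t := t) hkl)
  exact ⟨e, he⟩

def splitters (t : PTree n) (𝒩 : Finset (Finset (Fin (n - 1)))) (k l : Fin n) :
    Finset (Fin (n - 1)) :=
  univ.filter fun i => k ∈ nestVtx t (minNest 𝒩 i) ∧ l ∈ nestVtx t (minNest 𝒩 i) ∧
    i ∈ pathEdges t k l

lemma mem_splitters {i : Fin (n - 1)} :
    i ∈ splitters t 𝒩 k l ↔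
      k ∈ nestVtx t (minNest 𝒩 i) ∧ l ∈ nestVtx t (minNest 𝒩 i) ∧
        i ∈ pathEdges t k l := by
  simp [splitters]

lemma splitters_comm (t : PTree n) (𝒩 : Finset (Finset (Fin (n - 1)))) (k l : Fin n) :
    splitters t 𝒩 k l = splitters t 𝒩 l k := by
  ext i
  simp only [mem_splitters, pathEdges_comm t k l]
  tauto

lemma splitters_self (t : PTree n) (𝒩 : Finset (Finset (Fin (n - 1)))) (k : Fin n) :
    splitters t 𝒩 k k = ∅ := by
  ext i
  simp [mem_splitters, pathEdges_self]

lemma IsMaxNesting.card_splitters (hn : 2 ≤ n) (h𝒩 : IsMaxNesting t 𝒩) (hkl : k ≠ l) :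
    #(splitters t 𝒩 k l) = 1 := by
  obtain ⟨i, hi, hmax⟩ :=
    exists_max_image (pathEdges t k l) (fun j => #(minNest 𝒩 j)) (pathEdges_nonempty hkl)
  have hsub : pathEdges t k l ⊆ minNest 𝒩 i :=
    h𝒩.1.subset_minNest (edgesConnected_pathEdges t k l) hi hmax
  have hk := nestVtx_mono hsub (mem_nestVtx_pathEdges hkl)
  have hl := nestVtx_mono hsub (pathEdges_comm t l k ▸ mem_nestVtx_pathEdges hkl.symm)
  refine card_eq_one.2
    ⟨i, eq_singleton_iff_unique_mem.2 ⟨mem_splitters.2 ⟨hk, hl, hi⟩, ?_⟩⟩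
  intro j hj
  obtain ⟨hkj, hlj, hj⟩ := mem_splitters.1 hj
  refine h𝒩.minNest_injective hn (Subset.antisymm ?_ ?_)
  · exact minNest_subset (h𝒩.1.minNest_mem i) (hsub hj)
  · exact minNest_subset (h𝒩.1.minNest_mem j)
      ((h𝒩.1.1 _ (h𝒩.1.minNest_mem j)).pathEdges_subset hkj hlj hi)

lemma IsMaxNesting.card_inter_splitters (hn : 2 ≤ n) (h𝒩 : IsMaxNesting t 𝒩)
    (hN : IsNest t N) (hk : k ∈ nestVtx t N) (hl : l ∈ nestVtx t N) (hkl : k ≠ l) :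
    #(N ∩ splitters t 𝒩 k l) = 1 := by
  rw [inter_eq_right.2 fun i hi => hN.pathEdges_subset hk hl (mem_splitters.1 hi).2.2,
    h𝒩.card_splitters hn hkl]

lemma exists_mem_endpoints_mem_pathEdges (t : PTree n) (e : Fin (n - 1)) (v : Fin n) :
    ∃ u ∈ endpoints t e, e ∈ pathEdges t v u := by
  by_cases hv : isAnc t (childV e) v
  · exact ⟨_, parent_childV_mem_endpoints t e,
      mem_pathEdges.2 fun h => not_isAnc_childV_parent t e (h.1 hv)⟩
  · exact ⟨_, childV_mem_endpoints t e, mem_pathEdges.2 fun h => hv (h.2 (isAnc_refl t _))⟩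

lemma IsNesting.minNest_subset_iff (h𝒩 : IsNesting t 𝒩) (hN : IsNest t N) (i : Fin (n - 1)) :
    minNest 𝒩 i ⊆ N ↔ ∀ k l, i ∈ splitters t 𝒩 k l → k ∈ nestVtx t N := by
  refine ⟨fun h k l hi => nestVtx_mono h (mem_splitters.1 hi).1, fun h e he => ?_⟩
  by_contra heN
  obtain ⟨v, hv, hvN⟩ : ∃ v ∈ endpoints t e, v ∉ nestVtx t N := by
    by_contra! hall
    exact heN (mem_of_endpoints_subset hN.edgesConnected hall)
  obtain ⟨u, hu, hiu⟩ := exists_mem_endpoints_mem_pathEdges t i v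
  exact hvN (h v u (mem_splitters.2 ⟨endpoints_subset_nestVtx he hv,
    endpoints_subset_nestVtx (h𝒩.mem_minNest i) hu, hiu⟩))

end Splitters

section PairWeights

open Finset

lemma sum_mul_sum_eq_sum_filter_lt {α R : Type*} [LinearOrder α] [CommSemiring R] (f : α → R)
    {A B : Finset α} (h : Disjoint A B) :
    (∑ a ∈ A, f a) * ∑ b ∈ B, f b =
      ∑ p ∈ (A ×ˢ B ∪ B ×ˢ A).filter (fun p => p.1 < p.2), f p.1 * f p.2 := by
  rw [sum_mul_sum, ← sum_product', filter_union,
    sum_union (disjoint_filter_filter (disjoint_product.2 (Or.inl h))),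
    ← sum_filter_add_sum_filter_not (A ×ˢ B) (fun p => p.1 < p.2)]
  congr 1
  refine sum_nbij' Prod.swap Prod.swap ?_ ?_ (fun _ _ => rfl) (fun _ _ => rfl)
    fun _ _ => mul_comm _ _
  · intro p hp
    simp only [mem_filter, mem_product, Prod.fst_swap, Prod.snd_swap] at hp ⊢
    exact ⟨hp.1.symm, lt_of_le_of_ne (not_lt.1 hp.2) fun heq =>
      disjoint_left.1 h hp.1.1 (heq ▸ hp.1.2)⟩
  · intro p hp
    simp only [mem_filter, mem_product, Prod.fst_swap, Prod.snd_swap] at hp ⊢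
    exact ⟨hp.1.symm, not_lt.2 hp.2.le⟩

variable {n : ℕ} {t : PTree n} {𝒩 : Finset (Finset (Fin (n - 1)))}

def ltPairs (n : ℕ) : Finset (Fin n × Fin n) := univ.filter fun p => p.1 < p.2

lemma mem_ltPairs {p : Fin n × Fin n} : p ∈ ltPairs n ↔ p.1 < p.2 := by simp [ltPairs]

def pairWeight (ω : Fin n → ℤ) (A : Finset (Fin n)) : ℤ :=
  ∑ p ∈ (A ×ˢ A).filter (fun p => p.1 < p.2), ω p.1 * ω p.2

lemma pairWeight_univ (ω : Fin n → ℤ) :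
    pairWeight ω univ =
      ∑ p ∈ univ.filter (fun p : Fin n × Fin n => p.1 < p.2), ω p.1 * ω p.2 := by
  rw [pairWeight, univ_product_univ]

lemma pairWeight_eq_sum_ite (ω : Fin n → ℤ) (A : Finset (Fin n)) :
    pairWeight ω A =
      ∑ p ∈ ltPairs n, if p.1 ∈ A ∧ p.2 ∈ A then ω p.1 * ω p.2 else 0 := by
  rw [pairWeight, ← sum_filter]
  congr 1
  ext p
  simp [mem_ltPairs, and_comm]

lemma pairWeight_nonneg {ω : Fin n → ℤ} (hω : ∀ j, 0 < ω j) (A : Finset (Fin n)) :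
    0 ≤ pairWeight ω A :=
  sum_nonneg fun p _ => (mul_pos (hω p.1) (hω p.2)).le

lemma pairWeight_union_add_inter (ω : Fin n → ℤ) (A B : Finset (Fin n)) :
    pairWeight ω (A ∪ B) + pairWeight ω (A ∩ B) =
      pairWeight ω A + pairWeight ω B + (∑ a ∈ A \ B, ω a) * ∑ b ∈ B \ A, ω b := by
  rw [sum_mul_sum_eq_sum_filter_lt _ disjoint_sdiff_sdiff]
  have hcross : ((A \ B) ×ˢ (B \ A) ∪ (B \ A) ×ˢ (A \ B)).filter (fun p => p.1 < p.2) =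
      (ltPairs n).filter (fun p => p ∈ (A \ B) ×ˢ (B \ A) ∪ (B \ A) ×ˢ (A \ B)) := by
    ext p
    simp only [mem_filter, mem_ltPairs]
    tauto
  simp only [hcross, sum_filter, pairWeight_eq_sum_ite, ← sum_add_distrib]
  refine sum_congr rfl fun p _ => ?_
  by_cases h1A : p.1 ∈ A <;> by_cases h1B : p.1 ∈ B <;> by_cases h2A : p.2 ∈ A <;>
    by_cases h2B : p.2 ∈ B <;> simp [h1A, h1B, h2A, h2B]

variable (t 𝒩) (ω : Fin n → ℤ)

lemma alphaN_mul_betaN (i : Fin (n - 1)) :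
    alphaN t 𝒩 ω i * betaN t 𝒩 ω i =
      ∑ p ∈ ltPairs n, if i ∈ splitters t 𝒩 p.1 p.2 then ω p.1 * ω p.2 else 0 := by
  rw [alphaN, betaN, sum_mul_sum_eq_sum_filter_lt _ (disjoint_filter_filter_not _ _ _),
    ← sum_filter]
  refine sum_congr ?_ fun _ _ => rfl
  ext p
  simp only [mem_filter, mem_union, mem_product, mem_ltPairs, mem_splitters, mem_pathEdges]
  tauto

lemma sum_alphaN_mul_betaN (N : Finset (Fin (n - 1))) :
    ∑ i ∈ N, alphaN t 𝒩 ω i * betaN t 𝒩 ω i =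
      ∑ p ∈ ltPairs n, #(N ∩ splitters t 𝒩 p.1 p.2) * (ω p.1 * ω p.2) := by
  simp only [alphaN_mul_betaN]
  rw [sum_comm]
  refine sum_congr rfl fun p _ => ?_
  rw [sum_ite_mem, sum_const, nsmul_eq_mul]

end PairWeights

section LodayInequalities

open Finset

variable {n : ℕ} {t : PTree n} {𝒩 : Finset (Finset (Fin (n - 1)))} {N : Finset (Fin (n - 1))}
  {ω : Fin n → ℤ}

lemma IsMaxNesting.sum_alphaN_mul_betaN_eq (hn : 2 ≤ n) (h𝒩 : IsMaxNesting t 𝒩)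
    (hN : IsNest t N) :
    ∑ i ∈ N, alphaN t 𝒩 ω i * betaN t 𝒩 ω i = pairWeight ω (nestVtx t N) +
      ∑ p ∈ (ltPairs n).filter (fun p => ¬ (p.1 ∈ nestVtx t N ∧ p.2 ∈ nestVtx t N)),
        #(N ∩ splitters t 𝒩 p.1 p.2) * (ω p.1 * ω p.2) := by
  rw [sum_alphaN_mul_betaN, ← sum_filter_add_sum_filter_not (ltPairs n)
    (fun p => p.1 ∈ nestVtx t N ∧ p.2 ∈ nestVtx t N)]
  congr 1
  rw [pairWeight]
  refine sum_congr ?_ fun p hp => ?_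
  · ext p
    simp only [mem_filter, mem_ltPairs, mem_product]
    tauto
  · obtain ⟨⟨hk, hl⟩, hlt⟩ := (mem_filter.1 hp).imp_left mem_product.1
    rw [h𝒩.card_inter_splitters hn hN hk hl hlt.ne, Nat.cast_one, one_mul]

lemma IsMaxNesting.pairWeight_le_sum (hn : 2 ≤ n) (hω : ∀ j, 0 < ω j)
    (h𝒩 : IsMaxNesting t 𝒩) (hN : IsNest t N) :
    pairWeight ω (nestVtx t N) ≤ ∑ i ∈ N, alphaN t 𝒩 ω i * betaN t 𝒩 ω i := by
  rw [h𝒩.sum_alphaN_mul_betaN_eq hn hN, le_add_iff_nonneg_right]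
  exact sum_nonneg fun p _ => by have := hω p.1; have := hω p.2; positivity

lemma forall_inter_splitters_eq_empty_iff :
    (∀ p ∈ (ltPairs n).filter (fun p => ¬ (p.1 ∈ nestVtx t N ∧ p.2 ∈ nestVtx t N)),
        N ∩ splitters t 𝒩 p.1 p.2 = ∅) ↔
      ∀ i ∈ N, ∀ k l, i ∈ splitters t 𝒩 k l → k ∈ nestVtx t N := by
  simp only [mem_filter, mem_ltPairs, eq_empty_iff_forall_notMem, mem_inter]
  constructor
  · intro h i hi k l hkl
    by_contra hk
    rcases lt_trichotomy k l with hlt | rfl | hgt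
    · exact h (k, l) ⟨hlt, fun h' => hk h'.1⟩ i ⟨hi, hkl⟩
    · simp [splitters_self] at hkl
    · exact h (l, k) ⟨hgt, fun h' => hk h'.2⟩ i ⟨hi, splitters_comm t 𝒩 k l ▸ hkl⟩
  · rintro h p ⟨-, hp⟩ i ⟨hi, hip⟩
    exact hp ⟨h i hi _ _ hip, h i hi _ _ (splitters_comm t 𝒩 p.1 p.2 ▸ hip)⟩

lemma IsMaxNesting.sum_eq_pairWeight_iff (hn : 2 ≤ n) (hω : ∀ j, 0 < ω j)
    (h𝒩 : IsMaxNesting t 𝒩) (hN : IsNest t N) :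
    ∑ i ∈ N, alphaN t 𝒩 ω i * betaN t 𝒩 ω i = pairWeight ω (nestVtx t N) ↔
      N ∈ 𝒩 := by
  have hpos : ∀ p : Fin n × Fin n, 0 < ω p.1 * ω p.2 := fun p => mul_pos (hω p.1) (hω p.2)
  rw [h𝒩.sum_alphaN_mul_betaN_eq hn hN, add_eq_left,
    sum_eq_zero_iff_of_nonneg fun p _ => mul_nonneg (Nat.cast_nonneg _) (hpos p).le]
  simp only [mul_eq_zero, (hpos _).ne', or_false, Nat.cast_eq_zero, card_eq_zero,
    forall_inter_splitters_eq_empty_iff, ← h𝒩.1.minNest_subset_iff hN]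
  exact ⟨h𝒩.1.mem_of_forall_minNest_subset hn hN, fun hN𝒩 _ => minNest_subset hN𝒩⟩

end LodayInequalities

section Polyhedron

open Finset Filter Topology

variable {n : ℕ} {t : PTree n} {ω : Fin n → ℤ} {N M : Finset (Fin (n - 1))} {x : Vec (n - 1)}

def nestPolyhedron (t : PTree n) (ω : Fin n → ℤ) : Set (Vec (n - 1)) :=
  {x | ∑ i, x i = pairWeight ω univ} ∩
    ⋂ (N : Finset (Fin (n - 1))) (_ : IsNest t N) (_ : N ≠ univ),
      {x | (pairWeight ω (nestVtx t N) : ℝ) ≤ ∑ i ∈ N, x i}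

lemma mem_nestPolyhedron :
    x ∈ nestPolyhedron t ω ↔ ∑ i, x i = pairWeight ω univ ∧
      ∀ N, IsNest t N → N ≠ univ →
        (pairWeight ω (nestVtx t N) : ℝ) ≤ ∑ i ∈ N, x i := by
  simp [nestPolyhedron]

lemma pairWeight_le_sum_of_mem_nestPolyhedron (hn : 2 ≤ n) (hx : x ∈ nestPolyhedron t ω)
    (hN : IsNest t N) : (pairWeight ω (nestVtx t N) : ℝ) ≤ ∑ i ∈ N, x i := by
  rw [mem_nestPolyhedron] at hx
  by_cases hNu : N = univ
  · rw [hNu, nestVtx_univ hn, hx.1]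
  · exact hx.2 N hN hNu

lemma isLinearMap_sum_apply {m : ℕ} (N : Finset (Fin m)) :
    IsLinearMap ℝ fun x : Vec m => ∑ i ∈ N, x i :=
  ⟨fun x y => by simp [sum_add_distrib], fun c x => by simp [mul_sum]⟩

lemma convex_nestPolyhedron (t : PTree n) (ω : Fin n → ℤ) : Convex ℝ (nestPolyhedron t ω) :=
  (convex_hyperplane (isLinearMap_sum_apply univ) _).inter <| convex_iInter fun N =>
    convex_iInter fun _ => convex_iInter fun _ => convex_halfSpace_ge (isLinearMap_sum_apply N) _

lemma isCompact_nestPolyhedron (hn : 2 ≤ n) (hω : ∀ j, 0 < ω j) (t : PTree n) :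
    IsCompact (nestPolyhedron t ω) := by
  have hcont : ∀ N : Finset (Fin (n - 1)), Continuous fun x : Vec (n - 1) => ∑ i ∈ N, x i :=
    fun N => continuous_finsetSum N fun i _ => continuous_apply i
  have hclosed : IsClosed (nestPolyhedron t ω) :=
    (isClosed_eq (hcont univ) continuous_const).inter <| isClosed_iInter fun N =>
      isClosed_iInter fun _ => isClosed_iInter fun _ => isClosed_le continuous_const (hcont N)
  have hbox : nestPolyhedron t ω ⊆ Set.Icc 0 fun _ => (pairWeight ω univ : ℝ) := by
    intro x hx
    have hnonneg : ∀ i, 0 ≤ x i := fun i => by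
      have h := pairWeight_le_sum_of_mem_nestPolyhedron hn hx (isNest_singleton t i)
      rw [sum_singleton] at h
      exact le_trans (by exact_mod_cast pairWeight_nonneg hω _) h
    refine ⟨hnonneg, fun i => ?_⟩
    rw [← (mem_nestPolyhedron.1 hx).1]
    exact single_le_sum (fun j _ => hnonneg j) (mem_univ i)
  exact Metric.isCompact_of_isClosed_isBounded hclosed ((Metric.isBounded_Icc _ _).subset hbox)

lemma sum_MPoint (t : PTree n) (𝒩 : Finset (Finset (Fin (n - 1)))) (ω : Fin n → ℤ)
    (N : Finset (Fin (n - 1))) :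
    ∑ i ∈ N, MPoint t 𝒩 ω i =
      ((∑ i ∈ N, alphaN t 𝒩 ω i * betaN t 𝒩 ω i : ℤ) : ℝ) := by
  push_cast
  rfl

lemma MPoint_mem_nestPolyhedron (hn : 2 ≤ n) (hω : ∀ j, 0 < ω j)
    {𝒩 : Finset (Finset (Fin (n - 1)))} (h𝒩 : IsMaxNesting t 𝒩) :
    MPoint t 𝒩 ω ∈ nestPolyhedron t ω := by
  refine mem_nestPolyhedron.2 ⟨?_, fun N hN _ => ?_⟩
  · rw [← nestVtx_univ hn t,
      ← (h𝒩.sum_eq_pairWeight_iff hn hω (isNest_univ t)).2 h𝒩.1.2.1, ← sum_MPoint]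
  · rw [sum_MPoint]
    exact_mod_cast h𝒩.pairWeight_le_sum hn hω hN

lemma loday_subset_nestPolyhedron (hn : 2 ≤ n) (hω : ∀ j, 0 < ω j) (t : PTree n) :
    Loday t ω ⊆ nestPolyhedron t ω :=
  convexHull_min (fun _ ⟨_, h𝒩, hx⟩ => hx ▸ MPoint_mem_nestPolyhedron hn hω h𝒩)
    (convex_nestPolyhedron t ω)

lemma pairWeight_inter_nestVtx_le (hω : ∀ j, 0 < ω j) (hN : IsNest t N) (hM : IsNest t M) :
    pairWeight ω (nestVtx t N ∩ nestVtx t M) ≤ pairWeight ω (nestVtx t (N ∩ M)) := by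
  refine sum_le_sum_of_subset_of_nonneg (fun p hp => ?_) fun p _ _ => (mul_pos (hω _) (hω _)).le
  obtain ⟨⟨hk, hl⟩, hlt⟩ := (mem_filter.1 hp).imp_left mem_product.1
  exact mem_filter.2 ⟨mem_product.2 ⟨mem_nestVtx_inter hN hM hlt.ne hk hl,
    mem_nestVtx_inter hN hM hlt.ne' hl hk⟩, hlt⟩

/-- Inclusion–exclusion for `pairWeight` on `V(t(N))` and `V(t(M))` has a positive cross term. -/
lemma add_pairWeight_lt_of_not_subset (hn : 2 ≤ n) (hω : ∀ j, 0 < ω j)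
    (hx : x ∈ nestPolyhedron t ω) (hN : IsNest t N) (hM : IsNest t M) (hNM : IsNest t (N ∪ M))
    (hNsub : ¬ N ⊆ M) (hMsub : ¬ M ⊆ N) :
    (pairWeight ω (nestVtx t N) : ℝ) + pairWeight ω (nestVtx t M) <
      ∑ i ∈ N, x i + ∑ i ∈ M, x i := by
  set VN := nestVtx t N
  set VM := nestVtx t M
  set c : ℤ := (∑ a ∈ VN \ VM, ω a) * ∑ b ∈ VM \ VN, ω b
  have hcross : (0 : ℝ) < c := Int.cast_pos.2 <| mul_pos
    (sum_pos (fun j _ => hω j) (sdiff_nonempty.2 fun h => hNsub (hM.subset_of_nestVtx_subset h)))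
    (sum_pos (fun j _ => hω j) (sdiff_nonempty.2 fun h => hMsub (hN.subset_of_nestVtx_subset h)))
  have hincl : (pairWeight ω (nestVtx t (N ∪ M)) : ℝ) + pairWeight ω (VN ∩ VM) =
      pairWeight ω VN + pairWeight ω VM + c := by
    rw [nestVtx_union]
    exact_mod_cast pairWeight_union_add_inter ω VN VM
  have hI : (pairWeight ω (nestVtx t (N ∩ M)) : ℝ) ≤ ∑ i ∈ N ∩ M, x i := by
    rcases (N ∩ M).eq_empty_or_nonempty with h | h
    · simp [h, nestVtx, pairWeight]
    · exact pairWeight_le_sum_of_mem_nestPolyhedron hn hx (hN.inter hM h)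
  calc (pairWeight ω VN : ℝ) + pairWeight ω VM
      < pairWeight ω VN + pairWeight ω VM + c := by linarith
    _ = pairWeight ω (nestVtx t (N ∪ M)) + pairWeight ω (VN ∩ VM) := hincl.symm
    _ ≤ pairWeight ω (nestVtx t (N ∪ M)) + pairWeight ω (nestVtx t (N ∩ M)) := by
        gcongr
        exact_mod_cast pairWeight_inter_nestVtx_le hω hN hM
    _ ≤ ∑ i ∈ N ∪ M, x i + ∑ i ∈ N ∩ M, x i :=
        add_le_add (pairWeight_le_sum_of_mem_nestPolyhedron hn hx hNM) hI
    _ = ∑ i ∈ N, x i + ∑ i ∈ M, x i := sum_union_inter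

open Classical in
def tightNests (t : PTree n) (ω : Fin n → ℤ) (x : Vec (n - 1)) :
    Finset (Finset (Fin (n - 1))) :=
  univ.filter fun N => IsNest t N ∧ ∑ i ∈ N, x i = pairWeight ω (nestVtx t N)

lemma mem_tightNests :
    N ∈ tightNests t ω x ↔ IsNest t N ∧ ∑ i ∈ N, x i = pairWeight ω (nestVtx t N) := by
  simp [tightNests]

lemma isNesting_tightNests (hn : 2 ≤ n) (hω : ∀ j, 0 < ω j) (hx : x ∈ nestPolyhedron t ω) :
    IsNesting t (tightNests t ω x) := by
  refine ⟨fun N hN => (mem_tightNests.1 hN).1, mem_tightNests.2 ⟨isNest_univ t, ?_⟩,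
    fun N hN M hM => ?_⟩
  · rw [nestVtx_univ hn]
    exact (mem_nestPolyhedron.1 hx).1
  obtain ⟨hNn, hNx⟩ := mem_tightNests.1 hN
  obtain ⟨hMn, hMx⟩ := mem_tightNests.1 hM
  by_cases hNM : N ⊆ M
  · exact Or.inl hNM
  by_cases hMN : M ⊆ N
  · exact Or.inr (Or.inl hMN)
  refine Or.inr (Or.inr (by_contra fun h => ?_))
  obtain ⟨e, he, f, hf, hef⟩ : ∃ e ∈ N, ∃ f ∈ M, e = f ∨ edgeAdj t e f := by
    rcases not_and_or.1 h with h | h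
    · obtain ⟨e, he, hf⟩ := not_disjoint_iff.1 h
      exact ⟨e, he, e, hf, Or.inl rfl⟩
    · push Not at h
      obtain ⟨e, he, f, hf, hadj⟩ := h
      exact ⟨e, he, f, hf, Or.inr hadj⟩
  have := add_pairWeight_lt_of_not_subset hn hω hx hNn hMn (hNn.union hMn he hf hef) hNM hMN
  rw [hNx, hMx] at this
  exact lt_irrefl _ this

end Polyhedron

section Vertices

open Finset Filter Topology

def partialSums {m : ℕ} (F : Finset (Finset (Fin m))) : Vec m →ₗ[ℝ] F → ℝ where
  toFun x N := ∑ i ∈ N.1, x i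
  map_add' x y := by ext; simp [sum_add_distrib]
  map_smul' c x := by ext; simp [mul_sum]

lemma partialSums_apply {m : ℕ} (F : Finset (Finset (Fin m))) (x : Vec m) (N : F) :
    partialSums F x N = ∑ i ∈ N.1, x i := rfl

lemma le_card_of_injective_partialSums {m : ℕ} {F : Finset (Finset (Fin m))}
    (h : Function.Injective (partialSums F)) : m ≤ #F := by
  simpa using LinearMap.finrank_le_finrank_of_injective h

variable {n : ℕ} {t : PTree n} {ω : Fin n → ℤ} {x : Vec (n - 1)}

lemma eventually_add_smul_mem_nestPolyhedron (hn : 2 ≤ n) (hω : ∀ j, 0 < ω j)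
    (hx : x ∈ nestPolyhedron t ω) {d : Vec (n - 1)}
    (hd : partialSums (tightNests t ω x) d = 0) :
    ∀ᶠ ε : ℝ in 𝓝 0, x + ε • d ∈ nestPolyhedron t ω := by
  have hsum : ∀ (N : Finset (Fin (n - 1))) (ε : ℝ),
      ∑ i ∈ N, (x + ε • d) i = ∑ i ∈ N, x i + ε * ∑ i ∈ N, d i := fun N ε => by
    simp [sum_add_distrib, mul_sum]
  have htight : ∀ N ∈ tightNests t ω x, ∑ i ∈ N, d i = 0 := fun N hN =>
    congrFun hd ⟨N, hN⟩
  simp only [mem_nestPolyhedron, eventually_and, eventually_all]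
  refine ⟨.of_forall fun ε => ?_, fun N hNn _ => ?_⟩
  · rw [hsum, htight univ (isNesting_tightNests hn hω hx).2.1, mul_zero, add_zero]
    exact (mem_nestPolyhedron.1 hx).1
  by_cases hN : N ∈ tightNests t ω x
  · refine .of_forall fun ε => ?_
    rw [hsum, htight N hN, mul_zero, add_zero]
    exact pairWeight_le_sum_of_mem_nestPolyhedron hn hx hNn
  have hlt : (pairWeight ω (nestVtx t N) : ℝ) < ∑ i ∈ N, x i :=
    lt_of_le_of_ne (pairWeight_le_sum_of_mem_nestPolyhedron hn hx hNn) fun h =>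
      hN (mem_tightNests.2 ⟨hNn, h.symm⟩)
  have hlim : Tendsto (fun ε : ℝ => ∑ i ∈ N, x i + ε * ∑ i ∈ N, d i) (𝓝 0)
      (𝓝 (∑ i ∈ N, x i)) :=
    (continuous_const.add (continuous_id.mul continuous_const)).tendsto' 0 _ (by simp)
  exact (hlim.eventually (lt_mem_nhds hlt)).mono fun ε hε => by rw [hsum]; exact hε.le

lemma exists_isMaxNesting_of_mem_extremePoints (hn : 2 ≤ n) (hω : ∀ j, 0 < ω j)
    (hx : x ∈ (nestPolyhedron t ω).extremePoints ℝ) :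
    ∃ 𝒩, IsMaxNesting t 𝒩 ∧ x = MPoint t 𝒩 ω := by
  set F := tightNests t ω x
  have hF : IsNesting t F := isNesting_tightNests hn hω hx.1
  -- otherwise `x` could move both ways along a vector in the kernel of the tight equalities
  have hinj : Function.Injective (partialSums F) := by
    refine (injective_iff_map_eq_zero _).2 fun d hd => ?_
    obtain ⟨δ, hδ, hball⟩ :=
      Metric.eventually_nhds_iff.1 (eventually_add_smul_mem_nestPolyhedron hn hω hx.1 hd)
    have hsmall : ∀ ε : ℝ, |ε| = δ / 2 → x + ε • d ∈ nestPolyhedron t ω :=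
      fun ε hε => hball (by rw [Real.dist_0_eq_abs, hε]; linarith)
    have hseg : x ∈ openSegment ℝ (x + (δ / 2) • d) (x + (-(δ / 2)) • d) :=
      ⟨1 / 2, 1 / 2, by norm_num, by norm_num, by norm_num, by module⟩
    have h₁ := hsmall (δ / 2) (abs_of_pos (by linarith))
    have h₂ := hsmall (-(δ / 2)) (by rw [abs_neg, abs_of_pos (by linarith)])
    have heq := hx.2 h₁ h₂ hseg
    rw [add_eq_left, smul_eq_zero] at heq
    exact heq.resolve_left (by linarith)
  have hmax : IsMaxNesting t F :=
    ⟨hF, (hF.card_le hn).antisymm (le_card_of_injective_partialSums hinj)⟩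
  refine ⟨F, hmax, hinj (funext fun N => ?_)⟩
  obtain ⟨hN, hNx⟩ := mem_tightNests.1 N.2
  rw [partialSums_apply, partialSums_apply, hNx, sum_MPoint,
    (hmax.sum_eq_pairWeight_iff hn hω hN).2 N.2]

lemma nestPolyhedron_subset_loday (hn : 2 ≤ n) (hω : ∀ j, 0 < ω j) (t : PTree n) :
    nestPolyhedron t ω ⊆ Loday t ω := by
  have hfin : {x | ∃ 𝒩, IsMaxNesting t 𝒩 ∧ x = MPoint t 𝒩 ω}.Finite :=
    (Set.finite_range fun 𝒩 => MPoint t 𝒩 ω).subset fun _ ⟨𝒩, _, h⟩ => ⟨𝒩, h.symm⟩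
  rw [← closure_convexHull_extremePoints (isCompact_nestPolyhedron hn hω t)
    (convex_nestPolyhedron t ω)]
  exact closure_minimal (convexHull_mono fun x hx =>
    exists_isMaxNesting_of_mem_extremePoints hn hω hx) (hfin.isClosed_convexHull ℝ)

end Vertices

/-- For any planar tree `t ∈ PT_n` and any weight `ω` of length `n`, the Loday
realization `P_{(t,ω)} ⊆ ℝ^{n-1}`: (1) is contained in the hyperplane
`Σ_{i ∈ E(t)} x_i = Σ_{k<ℓ} ω_k ω_ℓ`; (2) for every nontrivial nest `N` and every maximal
nesting `𝒩`, the point `M(t,𝒩,ω)` satisfies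
`Σ_{i ∈ E(t(N))} x_i ≥ Σ_{k<ℓ ∈ V(t(N))} ω_k ω_ℓ`, with equality iff `N ∈ 𝒩`; and (3) equals
the intersection of the hyperplane of (1) with the half-spaces of (2). -/
theorem stmt13 {n : ℕ} (hn : 2 ≤ n) (t : PTree n) (ω : Fin n → ℤ) (hω : ∀ j, 0 < ω j) :
    (Loday t ω ⊆ {x : Vec (n - 1) |
        (∑ i, x i) =
          ((∑ p ∈ Finset.univ.filter (fun p : Fin n × Fin n => p.1 < p.2),
              ω p.1 * ω p.2 : ℤ) : ℝ)}) ∧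
    (∀ N : Finset (Fin (n - 1)), IsNest t N → N ≠ Finset.univ →
      ∀ 𝒩, IsMaxNesting t 𝒩 →
        (((∑ p ∈ (nestVtx t N ×ˢ nestVtx t N).filter (fun p => p.1 < p.2),
              ω p.1 * ω p.2 : ℤ) : ℝ) ≤ ∑ i ∈ N, MPoint t 𝒩 ω i) ∧
        ((∑ i ∈ N, MPoint t 𝒩 ω i) =
            ((∑ p ∈ (nestVtx t N ×ˢ nestVtx t N).filter (fun p => p.1 < p.2),
              ω p.1 * ω p.2 : ℤ) : ℝ) ↔ N ∈ 𝒩)) ∧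
    (Loday t ω = {x : Vec (n - 1) |
        (∑ i, x i) =
          ((∑ p ∈ Finset.univ.filter (fun p : Fin n × Fin n => p.1 < p.2),
              ω p.1 * ω p.2 : ℤ) : ℝ) ∧
        ∀ N : Finset (Fin (n - 1)), IsNest t N → N ≠ Finset.univ →
          ((∑ p ∈ (nestVtx t N ×ˢ nestVtx t N).filter (fun p => p.1 < p.2),
              ω p.1 * ω p.2 : ℤ) : ℝ) ≤ ∑ i ∈ N, x i}) := by
  have hloday := loday_subset_nestPolyhedron hn hω t
  refine ⟨fun x hx => ?_, fun N hN _ 𝒩 h𝒩 => ?_,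
    Set.Subset.antisymm (fun x hx => ?_) fun x hx => ?_⟩
  · rw [← pairWeight_univ]
    exact (mem_nestPolyhedron.1 (hloday hx)).1
  · rw [sum_MPoint]
    exact ⟨Int.cast_le.2 (h𝒩.pairWeight_le_sum hn hω hN),
      Int.cast_inj.trans (h𝒩.sum_eq_pairWeight_iff hn hω hN)⟩
  · rw [← pairWeight_univ]
    exact mem_nestPolyhedron.1 (hloday hx)
  · rw [← pairWeight_univ] at hx
    exact nestPolyhedron_subset_loday hn hω t (mem_nestPolyhedron.2 hx)
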